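/- Let Λ = ℤℓ ⊕ E₈(−2) with (ℓ.ℓ) = 2d, d even. Then there exists an even lattice Λ̃ containing Λ as a sublattice of index 2 such that E₈(−2) is primitively embedded in Λ̃. -/

import Mathlib

/-!
Put v = (ℓ + e)/2 and Λ̃ = ℤv + E; since ℓ = 2v − e, this contains Λ, and 2v ∈ Λ. It is even:
(v.v) = (2d + (e.e))/4 ∈ 2ℤ by the choice of e, and (v.f) = (e.f)/2 ∈ ℤ for f ∈ E. The functional
(ℓ . −) vanishes on E ⊗ ℚ, takes values in 2dℤ on Λ and the value d on v. Hence v ∉ Λ, and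
mv + f ∈ Λ̃ lies in E ⊗ ℚ only if m = 0.
-/

open Submodule

section Decomposition

variable {R M : Type*} [CommRing R] [AddCommGroup M] [Module R M] {v w : M} {E : Submodule R M}

theorem Submodule.exists_smul_add_eq_of_mem_span_singleton_sup (hw : w ∈ span R {v} ⊔ E) :
    ∃ r : R, ∃ f ∈ E, r • v + f = w := by
  obtain ⟨u, hu, f, hf, rfl⟩ := mem_sup.mp hw
  obtain ⟨r, rfl⟩ := mem_span_singleton.mp hu
  exact ⟨r, f, hf, rfl⟩

theorem Submodule.smul_mem_of_mem_span_singleton_sup {Λ : Submodule R M} {c : R}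
    (hv : c • v ∈ Λ) (hE : E ≤ Λ) (hw : w ∈ span R {v} ⊔ E) : c • w ∈ Λ := by
  obtain ⟨r, f, hf, rfl⟩ := exists_smul_add_eq_of_mem_span_singleton_sup hw
  rw [smul_add, smul_comm]
  exact add_mem (Λ.smul_mem r hv) (Λ.smul_mem c (hE hf))

end Decomposition

section Bilinear

variable {V : Type*} [AddCommGroup V] [Module ℚ V] {v w : V} {E : Submodule ℤ V}

theorem exists_eq_intCast_mul_of_mem_span_singleton_sup (φ : V →ₗ[ℚ] ℚ)
    (hE : ∀ f ∈ E, φ f = 0) (hw : w ∈ span ℤ {v} ⊔ E) : ∃ m : ℤ, φ w = m * φ v := by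
  obtain ⟨m, f, hf, rfl⟩ := exists_smul_add_eq_of_mem_span_singleton_sup hw
  exact ⟨m, by rw [map_add, map_zsmul, hE f hf, add_zero, zsmul_eq_mul]⟩

theorem notMem_span_singleton_sup_of_apply_eq_two_mul (φ : V →ₗ[ℚ] ℚ) {u : V}
    (hE : ∀ f ∈ E, φ f = 0) (hv : φ v ≠ 0) (hu : φ u = 2 * φ v) : v ∉ span ℤ {u} ⊔ E := by
  intro h
  obtain ⟨m, hm⟩ := exists_eq_intCast_mul_of_mem_span_singleton_sup φ hE h
  have : ((2 * m : ℤ) : ℚ) * φ v = φ v := calc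
    _ = m * φ u := by rw [hu]; push_cast; ring
    _ = φ v := hm.symm
  have : 2 * m = 1 := by exact_mod_cast (mul_eq_right₀ hv).mp this
  omega

theorem mem_of_mem_span_singleton_sup_of_apply_eq_zero (φ : V →ₗ[ℚ] ℚ)
    (hE : ∀ f ∈ E, φ f = 0) (hv : φ v ≠ 0) (hw : w ∈ span ℤ {v} ⊔ E) (hφw : φ w = 0) :
    w ∈ E := by
  obtain ⟨m, f, hf, rfl⟩ := exists_smul_add_eq_of_mem_span_singleton_sup hw
  rw [map_add, map_zsmul, hE f hf, add_zero, zsmul_eq_mul] at hφw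
  obtain rfl : m = 0 := by exact_mod_cast (mul_eq_zero.mp hφw).resolve_right hv
  rwa [zero_smul, zero_add]

theorem exists_two_mul_of_mem_span_singleton_sup (B : V →ₗ[ℚ] V →ₗ[ℚ] ℚ)
    (hsymm : ∀ u w, B u w = B w u) (hvv : ∃ k : ℤ, B v v = 2 * k)
    (hvE : ∀ f ∈ E, ∃ k : ℤ, B v f = k) (hE : ∀ f ∈ E, ∃ k : ℤ, B f f = 2 * k)
    (hw : w ∈ span ℤ {v} ⊔ E) : ∃ k : ℤ, B w w = 2 * k := by
  obtain ⟨m, f, hf, rfl⟩ := exists_smul_add_eq_of_mem_span_singleton_sup hw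
  obtain ⟨a, ha⟩ := hvv
  obtain ⟨b, hb⟩ := hvE f hf
  obtain ⟨c, hc⟩ := hE f hf
  refine ⟨m ^ 2 * a + m * b + c, ?_⟩
  simp only [map_add, map_zsmul, LinearMap.add_apply, LinearMap.smul_apply, zsmul_eq_mul,
    hsymm f v, ha, hb, hc]
  push_cast
  ring

end Bilinear

theorem stmt_6_general (V : Type*) [AddCommGroup V] [Module ℚ V]
    (B : V →ₗ[ℚ] V →ₗ[ℚ] ℚ) (hsymm : ∀ u v, B u v = B v u)
    (d : ℤ) (hdpos : 0 < d)
    (ℓ : V) (E : Submodule ℤ V)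
    (hℓℓ : B ℓ ℓ = 2 * d)
    (horth : ∀ e ∈ E, B ℓ e = 0)
    (hEeven : ∀ e₁ ∈ E, ∀ e₂ ∈ E, ∃ k : ℤ, B e₁ e₂ = 2 * k)
    (hrep : ∃ e ∈ E, ∃ k : ℤ, B e e = -2 * d + 8 * k) :
    ∃ Λ' : Submodule ℤ V,
      (Submodule.span ℤ {ℓ} ⊔ E) ≤ Λ' ∧
      Λ' ≠ (Submodule.span ℤ {ℓ} ⊔ E) ∧
      (∀ w ∈ Λ', (2 : ℤ) • w ∈ (Submodule.span ℤ {ℓ} ⊔ E)) ∧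
      (∀ w ∈ Λ', ∃ k : ℤ, B w w = 2 * k) ∧
      (∀ w ∈ Λ', w ∈ Submodule.span ℚ (E : Set V) → w ∈ E) := by
  obtain ⟨e, heE, k, hek⟩ := hrep
  set v : V := (2 : ℚ)⁻¹ • (ℓ + e)
  have h2v : (2 : ℤ) • v = ℓ + e := by
    rw [← Int.cast_smul_eq_zsmul ℚ, smul_smul]
    norm_num
  have hℓv : B ℓ v = d := by
    simp only [v, map_smul, map_add, hℓℓ, horth e heE, smul_eq_mul]
    ring
  have hvv : B v v = 2 * k := by
    simp only [v, map_smul, map_add, LinearMap.add_apply, LinearMap.smul_apply, smul_eq_mul,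
      hℓℓ, horth e heE, hsymm e ℓ, hek]
    ring
  have hvE (f : V) (hf : f ∈ E) : ∃ k : ℤ, B v f = k := by
    obtain ⟨b, hb⟩ := hEeven e heE f hf
    refine ⟨b, ?_⟩
    simp only [v, map_smul, map_add, LinearMap.add_apply, LinearMap.smul_apply, smul_eq_mul,
      horth f hf, hb]
    ring
  have hℓv0 : B ℓ v ≠ 0 := hℓv ▸ by exact_mod_cast hdpos.ne'
  have hv : v ∉ span ℤ {ℓ} ⊔ E :=
    notMem_span_singleton_sup_of_apply_eq_two_mul (B ℓ) horth hℓv0 (by rw [hℓℓ, hℓv])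
  have hℓ : ℓ ∈ span ℤ {v} ⊔ E := by
    rw [eq_sub_of_add_eq h2v.symm]
    exact sub_mem (mem_sup_left (smul_mem _ _ (mem_span_singleton_self v))) (mem_sup_right heE)
  have h2vΛ : (2 : ℤ) • v ∈ span ℤ {ℓ} ⊔ E :=
    h2v ▸ add_mem (mem_sup_left (mem_span_singleton_self ℓ)) (mem_sup_right heE)
  refine ⟨span ℤ {v} ⊔ E, sup_le ((span_singleton_le_iff_mem _ _).mpr hℓ) le_sup_right,
    fun h => hv (h ▸ mem_sup_left (mem_span_singleton_self v)),
    fun w => smul_mem_of_mem_span_singleton_sup h2vΛ le_sup_right,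
    fun w => exists_two_mul_of_mem_span_singleton_sup B hsymm ⟨k, hvv⟩ hvE
      (fun f hf => hEeven f hf f hf),
    fun w hw hwE => mem_of_mem_span_singleton_sup_of_apply_eq_zero (B ℓ) horth hℓv0 hw ?_⟩
  exact (span_le (p := LinearMap.ker (B ℓ))).mpr horth hwE

/-- Let Λ = ℤℓ ⊕ E₈(−2) with (ℓ.ℓ) = 2d, d even (d > 0), sitting inside
the rational quadratic space V = Λ ⊗ ℚ. The properties of E₈(−2) used are encoded as
hypotheses: all pairings are even, all squares are divisible by 4, and there is a vector
e with (e.e) ≡ −2d (mod 8). Then there exists an even overlattice Λ̃ ⊃ Λ of index 2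
(Λ̃ ≠ Λ but 2Λ̃ ⊆ Λ) in which E₈(−2) is primitively embedded. -/
theorem stmt_6 (V : Type*) [AddCommGroup V] [Module ℚ V]
    (B : V →ₗ[ℚ] V →ₗ[ℚ] ℚ) (hsymm : ∀ u v, B u v = B v u)
    (d : ℤ) (hd : Even d) (hdpos : 0 < d)
    (ℓ : V) (E : Submodule ℤ V)
    (hℓℓ : B ℓ ℓ = 2 * d)
    (horth : ∀ e ∈ E, B ℓ e = 0)
    (hEeven : ∀ e₁ ∈ E, ∀ e₂ ∈ E, ∃ k : ℤ, B e₁ e₂ = 2 * k)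
    (hE4 : ∀ e ∈ E, ∃ k : ℤ, B e e = 4 * k)
    (hrep : ∃ e ∈ E, ∃ k : ℤ, B e e = -2 * d + 8 * k)
    (hℓE : ℓ ∉ Submodule.span ℚ (E : Set V)) :
    ∃ Λ' : Submodule ℤ V,
      (Submodule.span ℤ {ℓ} ⊔ E) ≤ Λ' ∧
      Λ' ≠ (Submodule.span ℤ {ℓ} ⊔ E) ∧
      (∀ w ∈ Λ', (2 : ℤ) • w ∈ (Submodule.span ℤ {ℓ} ⊔ E)) ∧
      (∀ w ∈ Λ', ∃ k : ℤ, B w w = 2 * k) ∧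
      (∀ w ∈ Λ', w ∈ Submodule.span ℚ (E : Set V) → w ∈ E) :=
  stmt_6_general V B hsymm d hdpos ℓ E hℓℓ horth hEeven hrep
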